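/- Let γ be a gauge on ℝ^d and x ∈ ℝ^d \ {0}. Then for all y ∈ ℝ^d, the set {α ∈ ℝ : γ(αx + y + x) = γ(αx + y − x)} is a non-empty compact interval. -/

import Mathlib

/-!
Along the line `α ↦ αx + y` the gauge becomes a convex function `g` of one real variable,
and the bisector condition reads `f α = 0` for the central difference
`f α = g (α + 1) - g (α - 1)`. Convexity makes `f` monotone and continuous, so its zero set is
an order-connected closed set. Since `γ x > 0` and `γ (-x) > 0`, `g` grows at least linearly in
both directions; hence `f` takes both signs, which makes the zero set nonempty and bounded.
-/

open scoped RealInnerProductSpace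

noncomputable section

variable {d : ℕ}

/-- A gauge on ℝ^d: nonnegative, vanishing only at 0, positively homogeneous, subadditive. -/
def IsGauge (γ : EuclideanSpace ℝ (Fin d) → ℝ) : Prop :=
  (∀ x, 0 ≤ γ x) ∧ (∀ x, γ x = 0 → x = 0) ∧
  (∀ (x : EuclideanSpace ℝ (Fin d)) (l : ℝ), 0 < l → γ (l • x) = l * γ x) ∧
  (∀ x y, γ (x + y) ≤ γ x + γ y)

/-- The polar function of a gauge. -/
def polarGauge (γ : EuclideanSpace ℝ (Fin d) → ℝ) : EuclideanSpace ℝ (Fin d) → ℝ :=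
  fun xs => sInf {l : ℝ | 0 < l ∧ ∀ x, ⟪xs, x⟫ ≤ l * γ x}

/-- The ε-subdifferential of f at x. -/
def epsSubdiff (f : EuclideanSpace ℝ (Fin d) → ℝ) (ε : ℝ) (x : EuclideanSpace ℝ (Fin d)) :
    Set (EuclideanSpace ℝ (Fin d)) :=
  {xs | ∀ y, ⟪xs, y - x⟫ ≤ f y - f x + ε}

/-- ε-Birkhoff orthogonality: x ⊥_B^ε y iff γ x ≤ γ (x + λ y) + ε for all λ. -/
def BirkhoffEps (γ : EuclideanSpace ℝ (Fin d) → ℝ) (ε : ℝ)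
    (x y : EuclideanSpace ℝ (Fin d)) : Prop :=
  ∀ l : ℝ, γ x ≤ γ (x + l • y) + ε

/-- The ε-directional derivative of f at x in direction y. -/
def epsDirDeriv (f : EuclideanSpace ℝ (Fin d) → ℝ) (ε : ℝ)
    (x y : EuclideanSpace ℝ (Fin d)) : ℝ :=
  sInf {q : ℝ | ∃ l : ℝ, 0 < l ∧ q = (f (x + l • y) - f x + ε) / l}

open Set Filter

section CentralDifference

variable {𝕜 : Type*} [Field 𝕜] [LinearOrder 𝕜] [IsStrictOrderedRing 𝕜] {g : 𝕜 → 𝕜}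

theorem ConvexOn.monotone_centralDifference (hg : ConvexOn 𝕜 univ g) {c : 𝕜} (hc : 0 < c) :
    Monotone fun t => g (t + c) - g (t - c) := by
  intro p q hpq
  have h2c : (0 : 𝕜) < 2 * c := by positivity
  -- Compare both secant slopes with the slope over `[p - c, q + c]`.
  have left : (g (p + c) - g (p - c)) / (p + c - (p - c)) ≤
      (g (q + c) - g (p - c)) / (q + c - (p - c)) :=
    hg.secant_mono trivial trivial trivial (by linarith) (by linarith) (by linarith)
  have right : (g (p - c) - g (q + c)) / (p - c - (q + c)) ≤
      (g (q - c) - g (q + c)) / (q - c - (q + c)) :=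
    hg.secant_mono trivial trivial trivial (by linarith) (by linarith) (by linarith)
  rw [← neg_div_neg_eq (g (p - c) - _), ← neg_div_neg_eq (g (q - c) - _)] at right
  have hp : p + c - (p - c) = 2 * c := by ring
  have hq : -(q - c - (q + c)) = 2 * c := by ring
  rw [hp] at left
  rw [hq, neg_sub, neg_sub, neg_sub] at right
  exact (div_le_div_iff_of_pos_right h2c).mp (left.trans right)

end CentralDifference

section Unbounded

variable {β : Type*} [LinearOrder β] [NoMaxOrder β] {g : ℝ → β}

theorem exists_lt_add_of_tendsto_atTop (hg : Tendsto g atTop atTop) {c : ℝ} (hc : 0 < c) :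
    ∃ t, g t < g (t + c) := by
  by_contra! hdec
  have hbdd : ∀ n : ℕ, g (n * c) ≤ g 0 := by
    intro n
    induction n with
    | zero => simp
    | succ n ih =>
      calc g ((n + 1 : ℕ) * c) = g (n * c + c) := by push_cast; ring_nf
        _ ≤ g (n * c) := hdec _
        _ ≤ g 0 := ih
  obtain ⟨n, hn⟩ := ((hg.comp (tendsto_natCast_atTop_atTop.atTop_mul_const hc)).eventually_gt_atTop
    (g 0)).exists
  exact (hbdd n).not_gt hn

theorem exists_add_lt_of_tendsto_atBot (hg : Tendsto g atBot atTop) {c : ℝ} (hc : 0 < c) :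
    ∃ t, g (t + c) < g t := by
  obtain ⟨t, ht⟩ := exists_lt_add_of_tendsto_atTop (hg.comp tendsto_neg_atTop_atBot) hc
  refine ⟨-t - c, ?_⟩
  rwa [sub_add_cancel, sub_eq_add_neg, ← neg_add]

end Unbounded

theorem Monotone.exists_preimage_singleton_eq_Icc {α δ : Type*}
    [ConditionallyCompleteLinearOrder α] [TopologicalSpace α] [OrderTopology α] [DenselyOrdered α]
    [LinearOrder δ] [TopologicalSpace δ] [OrderClosedTopology δ]
    {f : α → δ} (hmono : Monotone f) (hcont : Continuous f) {a b : α} {v : δ}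
    (ha : f a < v) (hb : v < f b) :
    ∃ l u, l ≤ u ∧ f ⁻¹' {v} = Icc l u := by
  set S := f ⁻¹' {v}
  have hne : S.Nonempty := intermediate_value_univ a b hcont ⟨ha.le, hb.le⟩
  have hbdd : S ⊆ Icc a b := fun s (hs : f s = v) =>
    ⟨le_of_not_gt fun h => (hmono h.le).not_gt (hs ▸ ha),
      le_of_not_gt fun h => (hmono h.le).not_gt (hs ▸ hb)⟩
  have hbelow : BddBelow S := bddBelow_Icc.mono hbdd
  have habove : BddAbove S := bddAbove_Icc.mono hbdd
  have hconn : IsConnected S :=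
    ⟨hne, (ordConnected_singleton.preimage_mono hmono).isPreconnected⟩
  exact ⟨_, _, csInf_le_csSup hne hbelow habove, eq_Icc_csInf_csSup_of_connected_bdd_closed
    hconn hbelow habove (isClosed_singleton.preimage hcont)⟩

namespace IsGauge

variable {γ : EuclideanSpace ℝ (Fin d) → ℝ} (hγ : IsGauge γ)
include hγ

theorem map_zero : γ 0 = 0 := by
  have h := hγ.2.2.1 0 2 two_pos
  rw [smul_zero] at h
  linarith

theorem convexOn : ConvexOn ℝ univ γ := by
  refine ⟨convex_univ, fun u _ v _ a b ha hb _ => ?_⟩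
  have smul_le : ∀ (t : ℝ) w, 0 ≤ t → γ (t • w) ≤ t * γ w := fun t w ht => by
    rcases ht.eq_or_lt with rfl | ht
    · simpa using hγ.map_zero.le
    · exact (hγ.2.2.1 w t ht).le
  calc γ (a • u + b • v) ≤ γ (a • u) + γ (b • v) := hγ.2.2.2 _ _
    _ ≤ a • γ u + b • γ v := add_le_add (smul_le a u ha) (smul_le b v hb)

theorem pos_of_ne_zero {x : EuclideanSpace ℝ (Fin d)} (hx : x ≠ 0) : 0 < γ x :=
  (hγ.1 x).lt_of_ne fun h => hx (hγ.2.1 x h.symm)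

theorem convexOn_line (x y : EuclideanSpace ℝ (Fin d)) :
    ConvexOn ℝ univ fun α : ℝ => γ (α • x + y) := by
  simpa [Function.comp_def, AffineMap.lineMap_apply] using
    hγ.convexOn.comp_affineMap (AffineMap.lineMap y (x + y))

theorem tendsto_atTop_line {x : EuclideanSpace ℝ (Fin d)} (hx : x ≠ 0)
    (y : EuclideanSpace ℝ (Fin d)) :
    Tendsto (fun α : ℝ => γ (α • x + y)) atTop atTop := by
  refine tendsto_atTop_mono' _ ?_
    (tendsto_atTop_add_const_right _ (-γ (-y)) (tendsto_id.atTop_mul_const (hγ.pos_of_ne_zero hx)))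
  filter_upwards [eventually_gt_atTop 0] with α hα
  have h := hγ.2.2.2 (α • x + y) (-y)
  rw [add_neg_cancel_right, hγ.2.2.1 x α hα] at h
  simp only [id]
  linarith

theorem tendsto_atBot_line {x : EuclideanSpace ℝ (Fin d)} (hx : x ≠ 0)
    (y : EuclideanSpace ℝ (Fin d)) :
    Tendsto (fun α : ℝ => γ (α • x + y)) atBot atTop := by
  simpa [Function.comp_def] using
    (hγ.tendsto_atTop_line (neg_ne_zero.mpr hx) y).comp tendsto_neg_atBot_atTop

end IsGauge

theorem bisector_directional_convexity (γ : EuclideanSpace ℝ (Fin d) → ℝ)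
    (hγ : IsGauge γ) (x : EuclideanSpace ℝ (Fin d)) (hx : x ≠ 0)
    (y : EuclideanSpace ℝ (Fin d)) :
    ∃ a b : ℝ, a ≤ b ∧
      {α : ℝ | γ (α • x + y + x) = γ (α • x + y - x)} = Set.Icc a b := by
  set g : ℝ → ℝ := fun α => γ (α • x + y)
  have hg : ConvexOn ℝ univ g := hγ.convexOn_line x y
  have hbisector : {α : ℝ | γ (α • x + y + x) = γ (α • x + y - x)} =
      (fun α => g (α + 1) - g (α - 1)) ⁻¹' {0} := by
    ext α
    simp only [g, mem_ofPred_eq, mem_preimage, mem_singleton_iff, sub_eq_zero, add_smul,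
      sub_smul, one_smul, add_right_comm _ x y, sub_add_eq_add_sub]
  obtain ⟨a, ha⟩ := exists_add_lt_of_tendsto_atBot (hγ.tendsto_atBot_line hx y) two_pos
  obtain ⟨b, hb⟩ := exists_lt_add_of_tendsto_atTop (hγ.tendsto_atTop_line hx y) two_pos
  have hgc : Continuous g := continuousOn_univ.mp (hg.continuousOn isOpen_univ)
  rw [hbisector]
  refine (hg.monotone_centralDifference one_pos).exists_preimage_singleton_eq_Icc
    (by fun_prop) (a := a + 1) (b := b + 1) ?_ ?_
  · simpa only [add_sub_cancel_right, add_assoc, one_add_one_eq_two, sub_neg] using ha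
  · simpa only [add_sub_cancel_right, add_assoc, one_add_one_eq_two, sub_pos] using hb
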